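/- Let A be a τ-synchronising set of a string T of length n, with τ ≤ n/2. If for some position i the shortest period p of T[i..i+3τ−2] satisfies p ≤ τ/3, then T[i..succ_A(i)+2τ−1) is the longest prefix of T[i..n] having period p, where succ_A(i) = min{j ∈ A ∪ {n − 2τ + 2} : j ≥ i}. -/
import Mathlib


variable {α : Type*}

/-- Smallest period of the fragment `T[i..j]` (1-indexed, inclusive). -/
noncomputable def minPerI (T : ℕ → α) (i j : ℕ) : ℕ :=
  sInf {p | 0 < p ∧ ∀ a, i ≤ a → a + p ≤ j → T a = T (a + p)}

/-- `A` is a τ-synchronising set of the 1-indexed length-`n` string `T`. -/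
def SyncSet (T : ℕ → α) (n τ : ℕ) (A : Set ℕ) : Prop :=
  A ⊆ Set.Icc 1 (n - 2 * τ + 1) ∧
  (∀ i j, 1 ≤ i → 1 ≤ j → i + 2 * τ - 1 ≤ n → j + 2 * τ - 1 ≤ n →
    (∀ a < 2 * τ, T (i + a) = T (j + a)) → (i ∈ A ↔ j ∈ A)) ∧
  (∀ i, 1 ≤ i → i ≤ n - 3 * τ + 2 →
    (A ∩ Set.Ico i (i + τ) = ∅ ↔ 3 * minPerI T i (i + 3 * τ - 2) ≤ τ))

/-- `succ_A(i) = min {j ∈ A ∪ {n - 2τ + 2} : j ≥ i}`. -/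
noncomputable def succA (A : Set ℕ) (n τ i : ℕ) : ℕ :=
  sInf ((A ∪ {n - 2 * τ + 2}) ∩ Set.Ici i)

lemma perSetNe (T : ℕ → α) (x y : ℕ) :
    {p | 0 < p ∧ ∀ a, x ≤ a → a + p ≤ y → T a = T (a + p)}.Nonempty :=
  ⟨y + 1, Nat.succ_pos y, fun a ha hay => absurd hay (by omega)⟩

lemma minPerI_mem (T : ℕ → α) (x y : ℕ) :
    0 < minPerI T x y ∧
      ∀ a, x ≤ a → a + minPerI T x y ≤ y → T a = T (a + minPerI T x y) :=
  Nat.sInf_mem (perSetNe T x y)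

lemma minPerI_le (T : ℕ → α) (x y q : ℕ) (hq : 0 < q)
    (h : ∀ a, x ≤ a → a + q ≤ y → T a = T (a + q)) : minPerI T x y ≤ q :=
  Nat.sInf_le ⟨hq, h⟩

/-- If `p = per(T[i..i+3τ-2]) ≤ τ/3`, then `T[i..succ_A(i)+2τ-1)` is the longest
prefix of `T[i..n]` having period `p`. -/
theorem stmt8 (T : ℕ → α) (n τ i p : ℕ) (A : Set ℕ)
    (hτ : 0 < τ) (hτn : 2 * τ ≤ n) (hA : SyncSet T n τ A)
    (hi : 1 ≤ i) (hin : i ≤ n - 3 * τ + 2)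
    (hp : p = minPerI T i (i + 3 * τ - 2)) (hper : 3 * p ≤ τ) :
    (∀ a, i ≤ a → a + p ≤ succA A n τ i + 2 * τ - 2 → T a = T (a + p)) ∧
    (succA A n τ i + 2 * τ - 1 ≤ n →
      T (succA A n τ i + 2 * τ - 1) ≠ T (succA A n τ i + 2 * τ - 1 - p)) := by
  obtain ⟨hA1, hA2, hA3⟩ := hA
  obtain ⟨hp0, hpper⟩ :
      0 < p ∧ ∀ a, i ≤ a → a + p ≤ i + 3 * τ - 2 → T a = T (a + p) :=
    hp ▸ minPerI_mem T i (i + 3 * τ - 2)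
  have hτ3 : 3 ≤ τ := by omega
  have hin' : i ≤ n - 2 * τ + 2 := by omega
  have hcne : ((A ∪ {n - 2 * τ + 2}) ∩ Set.Ici i).Nonempty :=
    ⟨n - 2 * τ + 2, Or.inr rfl, hin'⟩
  have hsmem : succA A n τ i ∈ (A ∪ {n - 2 * τ + 2}) ∩ Set.Ici i :=
    Nat.sInf_mem hcne
  have hsle : succA A n τ i ≤ n - 2 * τ + 2 := Nat.sInf_le ⟨Or.inr rfl, hin'⟩
  have hsi : i ≤ succA A n τ i := hsmem.2
  have keyA : ∀ L M, M ≤ n → M ≤ L → i + 3 * τ - 2 ≤ L →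
      (∀ a, i ≤ a → a + p ≤ L → T a = T (a + p)) →
      ∀ k, k ∈ A → i ≤ k → ¬ k ≤ M - 2 * τ + 1 := by
    intro L M hMn hML hLi hLper k hkA hik hk
    have hk2 : k ≤ n - 2 * τ + 1 := (hA1 hkA).2
    obtain ⟨j, hji, hjk, hkj, hjL, hjn⟩ :
        ∃ j, i ≤ j ∧ j ≤ k ∧ k < j + τ ∧ j + 3 * τ - 2 ≤ L ∧ j ≤ n - 3 * τ + 2 := by
      rcases le_total (k + 1) (i + τ) with h | h
      · exact ⟨i, le_refl _, hik, by omega, by omega, hin⟩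
      · exact ⟨k + 1 - τ, by omega, by omega, by omega, by omega, by omega⟩
    have hqle : minPerI T j (j + 3 * τ - 2) ≤ p :=
      minPerI_le T j (j + 3 * τ - 2) p hp0
        (fun a ha hap => hLper a (by omega) (by omega))
    have hq : 3 * minPerI T j (j + 3 * τ - 2) ≤ τ := by omega
    have hempty := (hA3 j (by omega) hjn).mpr hq
    rw [Set.eq_empty_iff_forall_notMem] at hempty
    exact hempty k ⟨hkA, hjk, hkj⟩
  by_cases hb : ∀ a, i ≤ a → T a = T (a + p)
  · -- the period extends forever
    have hsge : n - 2 * τ + 2 ≤ succA A n τ i := by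
      rcases hsmem.1 with h | h
      · by_contra hlt
        exact keyA (n + i + 3 * τ) n le_rfl (by omega) (by omega)
          (fun a ha _ => hb a ha) _ h hsi (by omega)
      · rw [Set.mem_singleton_iff] at h; omega
    exact ⟨fun a ha _ => hb a ha, fun hle => absurd hle (by omega)⟩
  · push_neg at hb
    have hBne : {a | i ≤ a ∧ T a ≠ T (a + p)}.Nonempty := hb
    obtain ⟨a₀, ha₀i, ha₀ne, hmin⟩ : ∃ a₀, i ≤ a₀ ∧ T a₀ ≠ T (a₀ + p) ∧
        ∀ a, i ≤ a → a < a₀ → T a = T (a + p) := by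
      refine ⟨sInf {a | i ≤ a ∧ T a ≠ T (a + p)}, (Nat.sInf_mem hBne).1,
        (Nat.sInf_mem hBne).2, ?_⟩
      intro a hai halt
      by_contra hne
      have := Nat.sInf_le (show a ∈ {a | i ≤ a ∧ T a ≠ T (a + p)} from ⟨hai, hne⟩)
      omega
    have hper_lt : ∀ a, i ≤ a → a + p ≤ a₀ + p - 1 → T a = T (a + p) :=
      fun a hai hap => hmin a hai (by omega)
    have hℓge : i + 3 * τ - 2 ≤ a₀ + p - 1 := by
      by_contra h
      exact ha₀ne (hpper a₀ ha₀i (by omega))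
    rcases le_or_gt n (a₀ + p - 1) with hcase | hcase
    · -- the period extends to the end of the string
      have hsge : n - 2 * τ + 2 ≤ succA A n τ i := by
        rcases hsmem.1 with h | h
        · by_contra hlt
          exact keyA (a₀ + p - 1) n le_rfl hcase hℓge hper_lt _ h hsi (by omega)
        · rw [Set.mem_singleton_iff] at h; omega
      exact ⟨fun a ha hap => hper_lt a ha (by omega),
        fun hle => absurd hle (by omega)⟩
    · -- the period breaks inside the string
      have hsge : (a₀ + p - 1) - 2 * τ + 2 ≤ succA A n τ i := by
        rcases hsmem.1 with h | h
        · by_contra hlt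
          exact keyA (a₀ + p - 1) (a₀ + p - 1) (by omega) le_rfl hℓge hper_lt
            _ h hsi (by omega)
        · rw [Set.mem_singleton_iff] at h; omega
      have hqbig : ¬ 3 * minPerI T (a₀ + p + 2 - 3 * τ)
          ((a₀ + p + 2 - 3 * τ) + 3 * τ - 2) ≤ τ := by
        intro h3q
        obtain ⟨hq0, hqper⟩ := minPerI_mem T (a₀ + p + 2 - 3 * τ)
          ((a₀ + p + 2 - 3 * τ) + 3 * τ - 2)
        generalize hqdef : minPerI T (a₀ + p + 2 - 3 * τ)
          ((a₀ + p + 2 - 3 * τ) + 3 * τ - 2) = q at h3q hq0 hqper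
        rw [show (a₀ + p + 2 - 3 * τ) + 3 * τ - 2 = a₀ + p by omega] at hqper
        have e1 : T (a₀ + p - q) = T (a₀ + p) := by
          have := hqper (a₀ + p - q) (by omega) (by omega)
          rwa [show a₀ + p - q + q = a₀ + p by omega] at this
        have e2 : T (a₀ + p - q - p) = T (a₀ + p - q) := by
          have := hper_lt (a₀ + p - q - p) (by omega) (by omega)
          rwa [show a₀ + p - q - p + p = a₀ + p - q by omega] at this
        have e3 : T (a₀ + p - q - p) = T a₀ := by
          have := hqper (a₀ + p - q - p) (by omega) (by omega)
          rwa [show a₀ + p - q - p + q = a₀ by omega] at this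
        exact ha₀ne (by rw [← e3, e2, e1])
      have hne : A ∩ Set.Ico (a₀ + p + 2 - 3 * τ)
          ((a₀ + p + 2 - 3 * τ) + τ) ≠ ∅ :=
        fun h => hqbig ((hA3 _ (by omega) (by omega)).mp h)
      obtain ⟨k, hkA, hk1, hk2⟩ := Set.nonempty_iff_ne_empty.mpr hne
      have hsk : succA A n τ i ≤ k :=
        Nat.sInf_le ⟨Or.inl hkA, Set.mem_Ici.mpr (by omega)⟩
      have hsle2 : succA A n τ i ≤ (a₀ + p - 1) - 2 * τ + 2 := by omega
      refine ⟨fun a ha hap => hper_lt a ha (by omega), fun hle => ?_⟩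
      rw [show succA A n τ i + 2 * τ - 1 = a₀ + p by omega,
        show a₀ + p - p = a₀ by omega]
      exact fun h => ha₀ne h.symm
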